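/- arXiv:2603.00012 — 3 statements merged into one kernel-verified Lean document; each statement's English description precedes it below -/
import Mathlib

section
/- Let A be an m×m real symmetric matrix, B an n×m real matrix, and C an n×n real symmetric positive semidefinite matrix. Then the block matrix M = [[A, Bᵀ],[B, C]] is positive semidefinite if and only if A - Bᵀ C† B is positive semidefinite and the range of B is contained in the range of C, where C† denotes the Moore–Penrose pseudoinverse of C. -/
open Matrix

/-- `B` satisfies the four Penrose conditions as the Moore–Penrose pseudoinverse of `A`. -/
def IsMoorePenrose {m n : ℕ} (A : Matrix (Fin m) (Fin n) ℝ)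
    (B : Matrix (Fin n) (Fin m) ℝ) : Prop :=
  A * B * A = A ∧ B * A * B = B ∧ (A * B)ᵀ = A * B ∧ (B * A)ᵀ = B * A

/-- The column space (range) of a matrix. -/
def matRange {m n : ℕ} (A : Matrix (Fin m) (Fin n) ℝ) : Set (Fin m → ℝ) :=
  {y | ∃ x, A.mulVec x = y}

theorem mp_unique {m n : ℕ} {C : Matrix (Fin m) (Fin n) ℝ}
    {X Y : Matrix (Fin n) (Fin m) ℝ}
    (hX : IsMoorePenrose C X) (hY : IsMoorePenrose C Y) : X = Y := by
  obtain ⟨hX1, hX2, hX3, hX4⟩ := hX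
  obtain ⟨hY1, hY2, hY3, hY4⟩ := hY
  have hCX : C * X = C * Y := by
    calc C * X = (C * X)ᵀ := hX3.symm
    _ = Xᵀ * Cᵀ := by rw [transpose_mul]
    _ = Xᵀ * (C * Y * C)ᵀ := by rw [hY1]
    _ = (C * X)ᵀ * (C * Y)ᵀ := by simp [transpose_mul, Matrix.mul_assoc]
    _ = (C * X) * (C * Y) := by rw [hX3, hY3]
    _ = (C * X * C) * Y := by simp [Matrix.mul_assoc]
    _ = C * Y := by rw [hX1]
  have hXC : X * C = Y * C := by
    calc X * C = (X * C)ᵀ := hX4.symm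
    _ = Cᵀ * Xᵀ := by rw [transpose_mul]
    _ = (C * Y * C)ᵀ * Xᵀ := by rw [hY1]
    _ = (Y * C)ᵀ * (X * C)ᵀ := by simp [transpose_mul, Matrix.mul_assoc]
    _ = (Y * C) * (X * C) := by rw [hX4, hY4]
    _ = Y * (C * X * C) := by simp [Matrix.mul_assoc]
    _ = Y * C := by rw [hX1]
  calc X = X * C * X := hX2.symm
  _ = Y * C * X := by rw [hXC]
  _ = Y * (C * X) := by rw [Matrix.mul_assoc]
  _ = Y * (C * Y) := by rw [hCX]
  _ = Y * C * Y := by rw [Matrix.mul_assoc]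
  _ = Y := hY2

theorem mp_symm {n : ℕ} {C Cdag : Matrix (Fin n) (Fin n) ℝ} (hCs : Cᵀ = C)
    (h : IsMoorePenrose C Cdag) : Cdagᵀ = Cdag := by
  obtain ⟨h1, h2, h3, h4⟩ := h
  refine mp_unique ?_ ⟨h1, h2, h3, h4⟩
  refine ⟨?_, ?_, ?_, ?_⟩
  · calc C * Cdagᵀ * C = (Cᵀ * Cdag * Cᵀ)ᵀ := by simp [transpose_mul, Matrix.mul_assoc]
    _ = (C * Cdag * C)ᵀ := by rw [hCs]
    _ = C := by rw [h1, hCs]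
  · calc Cdagᵀ * C * Cdagᵀ = (Cdag * Cᵀ * Cdag)ᵀ := by simp [transpose_mul, Matrix.mul_assoc]
    _ = (Cdag * C * Cdag)ᵀ := by rw [hCs]
    _ = Cdagᵀ := by rw [h2]
  · have e1 : C * Cdagᵀ = Cdag * C := by
      calc C * Cdagᵀ = (Cdag * Cᵀ)ᵀ := by simp [transpose_mul]
      _ = (Cdag * C)ᵀ := by rw [hCs]
      _ = Cdag * C := h4
    rw [e1, h4]
  · have e2 : Cdagᵀ * C = C * Cdag := by
      calc Cdagᵀ * C = (Cᵀ * Cdag)ᵀ := by simp [transpose_mul]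
      _ = (C * Cdag)ᵀ := by rw [hCs]
      _ = C * Cdag := h3
    rw [e2, h3]

theorem schur_quad {m n : ℕ}
    (A : Matrix (Fin m) (Fin m) ℝ) (B : Matrix (Fin n) (Fin m) ℝ)
    (C Cdag : Matrix (Fin n) (Fin n) ℝ)
    (hCs : Cᵀ = C) (hds : Cdagᵀ = Cdag)
    (h2 : Cdag * C * Cdag = Cdag) (hB : C * Cdag * B = B)
    (x : Fin m → ℝ) (y : Fin n → ℝ) :
    (Sum.elim x y) ᵥ* (fromBlocks A Bᵀ B C) ⬝ᵥ (Sum.elim x y) =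
      ((Cdag * B) *ᵥ x + y) ᵥ* C ⬝ᵥ ((Cdag * B) *ᵥ x + y) +
        x ᵥ* (A - Bᵀ * Cdag * B) ⬝ᵥ x := by
  have hBC : Bᵀ * Cdag * C = Bᵀ := by
    calc Bᵀ * Cdag * C = (Cᵀ * Cdagᵀ * B)ᵀ := by simp [transpose_mul, Matrix.mul_assoc]
    _ = (C * Cdag * B)ᵀ := by rw [hCs, hds]
    _ = Bᵀ := by rw [hB]
  simp only [vecMul_fromBlocks, fromBlocks_mulVec, sumElim_dotProduct_sumElim,
    add_vecMul, vecMul_sub, sub_dotProduct, add_dotProduct, dotProduct_add,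
    vecMul_mulVec, Matrix.mul_assoc, vecMul_vecMul, dotProduct_mulVec,
    Sum.elim_comp_inl, Sum.elim_comp_inr, transpose_mul, hds, transpose_transpose]
  rw [show Bᵀ * (Cdag * (C * (Cdag * B))) = Bᵀ * (Cdag * B) by
        rw [← Matrix.mul_assoc C, ← Matrix.mul_assoc Cdag, ← Matrix.mul_assoc Cdag, h2],
      show C * (Cdag * B) = B by rw [← Matrix.mul_assoc, hB],
      show Bᵀ * (Cdag * C) = Bᵀ by rw [← Matrix.mul_assoc, hBC]]
  ring

theorem matrix_ext_mulVec {p q : ℕ} {M : Matrix (Fin p) (Fin q) ℝ}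
    (h : ∀ x, M *ᵥ x = 0) : M = 0 := by
  ext i j
  have := congrFun (h (Pi.single j 1)) i
  simpa [mulVec_single_one] using this

theorem aux_lin (c d : ℝ) (h : ∀ t : ℝ, 0 ≤ c + 2 * t * d) : d = 0 := by
  by_contra hd
  have h1 := h ((-c - 1) / (2 * d))
  have he : 2 * ((-c - 1) / (2 * d)) * d = -c - 1 := by
    field_simp
  rw [he] at h1
  linarith

/-- Generalized Schur complement: for symmetric `A`, matrix `B`, PSD `C` with
Moore–Penrose pseudoinverse `Cdag`, the block matrix `[[A, Bᵀ],[B, C]]` is PSD iff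
`A - Bᵀ C† B` is PSD and `range B ⊆ range C`. -/
theorem generalized_schur_complement {m n : ℕ}
    (A : Matrix (Fin m) (Fin m) ℝ) (B : Matrix (Fin n) (Fin m) ℝ)
    (C Cdag : Matrix (Fin n) (Fin n) ℝ)
    (hA : A.IsSymm) (hC : C.PosSemidef) (hCdag : IsMoorePenrose C Cdag) :
    (Matrix.fromBlocks A Bᵀ B C).PosSemidef ↔
      (A - Bᵀ * Cdag * B).PosSemidef ∧ matRange B ⊆ matRange C := by
  obtain ⟨h1, h2, h3, h4⟩ := hCdag
  have hCs : Cᵀ = C := by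
    have := hC.1
    rwa [IsHermitian, conjTranspose_eq_transpose_of_trivial] at this
  have hds : Cdagᵀ = Cdag := mp_symm hCs ⟨h1, h2, h3, h4⟩
  have hCq : ∀ w : Fin n → ℝ, 0 ≤ w ᵥ* C ⬝ᵥ w := by
    intro w
    have := hC.dotProduct_mulVec_nonneg w
    simpa [dotProduct_mulVec] using this
  -- key: from hB we get the quadratic identity
  have hquad := schur_quad A B C Cdag hCs hds h2
  have hSsymm : (A - Bᵀ * Cdag * B).IsHermitian := by
    rw [IsHermitian, conjTranspose_eq_transpose_of_trivial, transpose_sub,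
      transpose_mul, transpose_mul, transpose_transpose, hds, hA, Matrix.mul_assoc]
  constructor
  · intro hM
    -- kernel of C is contained in kernel of Bᵀ
    have hker : ∀ y : Fin n → ℝ, C *ᵥ y = 0 → Bᵀ *ᵥ y = 0 := by
      intro y hy
      have key : ∀ x : Fin m → ℝ, (Bᵀ *ᵥ y) ⬝ᵥ x = 0 := by
        intro x
        have hq : ∀ t : ℝ, 0 ≤ x ⬝ᵥ A *ᵥ x + 2 * t * ((Bᵀ *ᵥ y) ⬝ᵥ x) := by
          intro t
          have := hM.dotProduct_mulVec_nonneg (Sum.elim x (t • y))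
          simp only [star_trivial, fromBlocks_mulVec, sumElim_dotProduct_sumElim,
            Sum.elim_comp_inl, Sum.elim_comp_inr, mulVec_smul, hy, smul_zero,
            dotProduct_add, add_zero, dotProduct_smul, smul_dotProduct,
            smul_eq_mul, dotProduct_zero, mul_zero] at this
          have e1 : x ⬝ᵥ Bᵀ *ᵥ y = (Bᵀ *ᵥ y) ⬝ᵥ x := dotProduct_comm _ _
          have e2 : y ⬝ᵥ B *ᵥ x = (Bᵀ *ᵥ y) ⬝ᵥ x := by
            rw [dotProduct_mulVec, ← mulVec_transpose]
          rw [e1, e2] at this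
          nlinarith [this]
        exact aux_lin _ _ hq
      have := key (Bᵀ *ᵥ y)
      rwa [dotProduct_comm, dotProduct_self_eq_zero] at this
    have hBmat : Bᵀ * (1 - Cdag * C) = 0 := by
      apply matrix_ext_mulVec
      intro x
      rw [← mulVec_mulVec]
      apply hker
      have hz : C * (1 - Cdag * C) = 0 := by
        rw [Matrix.mul_sub, Matrix.mul_one, ← Matrix.mul_assoc, h1, sub_self]
      rw [mulVec_mulVec, hz, zero_mulVec]
    have hBt : Bᵀ * (Cdag * C) = Bᵀ := by
      have h0 : Bᵀ * (1 : Matrix (Fin n) (Fin n) ℝ) - Bᵀ * (Cdag * C) = 0 := by rw [← Matrix.mul_sub, hBmat]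
      have h0' := sub_eq_zero.mp h0
      rw [Matrix.mul_one] at h0'
      exact h0'.symm
    have hB : C * Cdag * B = B := by
      calc C * Cdag * B = (Bᵀ * (Cdagᵀ * Cᵀ))ᵀ := by
            simp [transpose_mul, Matrix.mul_assoc]
      _ = (Bᵀ * (Cdag * C))ᵀ := by rw [hds, hCs]
      _ = B := by rw [hBt, transpose_transpose]
    refine ⟨PosSemidef.of_dotProduct_mulVec_nonneg hSsymm ?_, ?_⟩
    · intro x
      have := hM.dotProduct_mulVec_nonneg (Sum.elim x (-((Cdag * B) *ᵥ x)))
      rw [star_trivial, dotProduct_mulVec, hquad hB x (-((Cdag * B) *ᵥ x))] at this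
      simpa [dotProduct_mulVec] using this
    · rintro u ⟨x, hx⟩
      exact ⟨(Cdag * B) *ᵥ x, by
        rw [mulVec_mulVec, ← Matrix.mul_assoc, hB, hx]⟩
  · rintro ⟨hS, hR⟩
    have hB : C * Cdag * B = B := by
      have hv : ∀ x, (C * Cdag * B - B) *ᵥ x = 0 := by
        intro x
        obtain ⟨v, hv⟩ := hR ⟨x, rfl⟩
        have : (C * Cdag * B) *ᵥ x = B *ᵥ x := by
          calc (C * Cdag * B) *ᵥ x = (C * Cdag) *ᵥ (B *ᵥ x) := by
                rw [mulVec_mulVec, Matrix.mul_assoc]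
          _ = (C * Cdag) *ᵥ (C *ᵥ v) := by rw [hv]
          _ = (C * Cdag * C) *ᵥ v := by rw [mulVec_mulVec]
          _ = C *ᵥ v := by rw [h1]
          _ = B *ᵥ x := hv
        rw [sub_mulVec, this, sub_self]
      have := matrix_ext_mulVec hv
      rwa [sub_eq_zero] at this
    refine PosSemidef.of_dotProduct_mulVec_nonneg ?_ ?_
    · rw [IsHermitian, conjTranspose_eq_transpose_of_trivial, fromBlocks_transpose,
        transpose_transpose, hA, hCs]
    · intro z
      have hz : z = Sum.elim (z ∘ Sum.inl) (z ∘ Sum.inr) := by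
        ext (i | j) <;> rfl
      rw [star_trivial, hz, dotProduct_mulVec, hquad hB]
      have t1 := hCq ((Cdag * B) *ᵥ (z ∘ Sum.inl) + z ∘ Sum.inr)
      have t2 := hS.dotProduct_mulVec_nonneg (z ∘ Sum.inl)
      rw [star_trivial, dotProduct_mulVec] at t2
      linarith
end

section
/- Let K, M be n×n real symmetric positive semidefinite matrices, ω > 0, λ̲ = ω², and suppose S := K - λ̲M is positive semidefinite. Let Q be an n×q matrix with range(Q) ⊆ range(S), let r be a unit eigenvector of A := QᵀS†Q associated with its largest eigenvalue d_R, assume d_R > 0, and set f := Qr and u := S†f. Then u ≠ 0 and Ku = λ̲(M + (1/(λ̲ d_R)) QQᵀ)u, i.e., u is an eigenvector of the augmented generalized eigenvalue problem with eigenvalue λ̲. -/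
open Matrix

theorem mulVec_mulVec_eq_of_mem_matRange {m n : ℕ} {A : Matrix (Fin m) (Fin n) ℝ}
    {B : Matrix (Fin n) (Fin m) ℝ} (hABA : A * B * A = A) {y : Fin m → ℝ}
    (hy : y ∈ matRange A) : A *ᵥ (B *ᵥ y) = y := by
  obtain ⟨x, rfl⟩ := hy
  rw [mulVec_mulVec, mulVec_mulVec, hABA]

/-- Since `Q r = (1/d) Q Qᵀ u`, the load term `Q r` is absorbed into the mass matrix. -/
theorem mulVec_eq_smul_augmented_mulVec {ι κ 𝕜 : Type*} [Fintype ι] [Fintype κ] [Field 𝕜]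
    {K M : Matrix ι ι 𝕜} {Q : Matrix ι κ 𝕜} {lam d : 𝕜} {u : ι → 𝕜} {r : κ → 𝕜}
    (hlam : lam ≠ 0) (hd : d ≠ 0)
    (hSu : (K - lam • M) *ᵥ u = Q *ᵥ r) (hQu : Qᵀ *ᵥ u = d • r) :
    K *ᵥ u = lam • ((M + (1 / (lam * d)) • (Q * Qᵀ)) *ᵥ u) := by
  have hscalar : lam * (1 / (lam * d)) * d = 1 := by field_simp
  rw [sub_mulVec, smul_mulVec] at hSu
  rw [add_mulVec, smul_mulVec, ← mulVec_mulVec, hQu, mulVec_smul, smul_add, smul_smul,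
    smul_smul, hscalar, one_smul]
  linear_combination (norm := module) hSu

theorem displacement_eigenmode_relation_general {n q : ℕ}
    (K M : Matrix (Fin n) (Fin n) ℝ) (Q : Matrix (Fin n) (Fin q) ℝ)
    (Sdag : Matrix (Fin n) (Fin n) ℝ) (ω lam dR : ℝ) (r : Fin q → ℝ)
    (hω : 0 < ω) (hlam : lam = ω ^ 2)
    (hSdag : IsMoorePenrose (K - lam • M) Sdag)
    (hQ : matRange Q ⊆ matRange (K - lam • M))
    (hr_unit : ∑ i, (r i) ^ 2 = 1)
    (hr_eig : (Qᵀ * Sdag * Q).mulVec r = dR • r)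
    (hdR : 0 < dR) :
    Sdag.mulVec (Q.mulVec r) ≠ 0 ∧
      K.mulVec (Sdag.mulVec (Q.mulVec r)) =
        lam • ((M + (1 / (lam * dR)) • (Q * Qᵀ)).mulVec (Sdag.mulVec (Q.mulVec r))) := by
  obtain ⟨hSSdagS, -⟩ := hSdag
  have hlam0 : lam ≠ 0 := by rw [hlam]; positivity
  have hr0 : r ≠ 0 := by rintro rfl; simp at hr_unit
  have hQtu : Qᵀ *ᵥ (Sdag *ᵥ (Q *ᵥ r)) = dR • r := by
    rwa [mulVec_mulVec, mulVec_mulVec]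
  have hSu : (K - lam • M) *ᵥ (Sdag *ᵥ (Q *ᵥ r)) = Q *ᵥ r :=
    mulVec_mulVec_eq_of_mem_matRange hSSdagS (hQ ⟨r, rfl⟩)
  refine ⟨fun hu => hr0 ?_, mulVec_eq_smul_augmented_mulVec hlam0 hdR.ne' hSu hQtu⟩
  rw [hu, mulVec_zero] at hQtu
  exact (smul_eq_zero_iff_right hdR.ne').1 hQtu.symm

/-- Displacement–eigenmode relation: the worst-case displacement `u = S†(Qr)` is a
nonzero eigenvector of `K w = λ̲ (M + (1/(λ̲ d_R)) QQᵀ) w`. -/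
theorem displacement_eigenmode_relation {n q : ℕ}
    (K M : Matrix (Fin n) (Fin n) ℝ) (Q : Matrix (Fin n) (Fin q) ℝ)
    (Sdag : Matrix (Fin n) (Fin n) ℝ) (ω lam dR : ℝ) (r : Fin q → ℝ)
    (hK : K.PosSemidef) (hM : M.PosSemidef) (hω : 0 < ω) (hlam : lam = ω ^ 2)
    (hS : (K - lam • M).PosSemidef)
    (hSdag : IsMoorePenrose (K - lam • M) Sdag)
    (hQ : matRange Q ⊆ matRange (K - lam • M))
    (hr_unit : ∑ i, (r i) ^ 2 = 1)
    (hr_eig : (Qᵀ * Sdag * Q).mulVec r = dR • r)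
    (hmax : ∀ (ν : ℝ) (v : Fin q → ℝ), v ≠ 0 →
      (Qᵀ * Sdag * Q).mulVec v = ν • v → ν ≤ dR)
    (hdR : 0 < dR) :
    Sdag.mulVec (Q.mulVec r) ≠ 0 ∧
      K.mulVec (Sdag.mulVec (Q.mulVec r)) =
        lam • ((M + (1 / (lam * dR)) • (Q * Qᵀ)).mulVec (Sdag.mulVec (Q.mulVec r))) :=
  displacement_eigenmode_relation_general K M Q Sdag ω lam dR r hω hlam hSdag hQ hr_unit hr_eig hdR
end

section
/- Under the hypotheses of the displacement–eigenmode relation (K, M symmetric PSD, S = K - λ̲M ⪰ 0, range(Q) ⊆ range(S), d_R = λ_max(QᵀS†Q) > 0), the eigenvalue λ̲ is the smallest positive eigenvalue of the generalized eigenvalue problem Kw = μ(M + (1/(λ̲ d_R))QQᵀ)w; equivalently, K - λ̲(M + (1/(λ̲ d_R))QQᵀ) is positive semidefinite. -/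
open Matrix

/-- Uniqueness of the Moore–Penrose pseudoinverse. -/
lemma mp_unique_s14 {m n : ℕ} {A : Matrix (Fin m) (Fin n) ℝ}
    {B C : Matrix (Fin n) (Fin m) ℝ}
    (hB : IsMoorePenrose A B) (hC : IsMoorePenrose A C) : B = C := by
  obtain ⟨hB1, hB2, hB3, hB4⟩ := hB
  obtain ⟨hC1, hC2, hC3, hC4⟩ := hC
  have hAB : A * B = A * C := by
    calc A * B = (A * C * A) * B := by rw [hC1]
    _ = (A * C) * (A * B) := by simp only [Matrix.mul_assoc]
    _ = (A * C)ᵀ * (A * B)ᵀ := by rw [hC3, hB3]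
    _ = Cᵀ * (Aᵀ * (Bᵀ * Aᵀ)) := by simp only [transpose_mul, Matrix.mul_assoc]
    _ = Cᵀ * (A * B * A)ᵀ := by simp only [transpose_mul, Matrix.mul_assoc]
    _ = Cᵀ * Aᵀ := by rw [hB1]
    _ = (A * C)ᵀ := by rw [transpose_mul]
    _ = A * C := hC3
  have hBA : B * A = C * A := by
    calc B * A = B * (A * C * A) := by rw [hC1]
    _ = (B * A) * (C * A) := by simp only [Matrix.mul_assoc]
    _ = (B * A)ᵀ * (C * A)ᵀ := by rw [hB4, hC4]
    _ = ((Aᵀ * Bᵀ) * Aᵀ) * Cᵀ := by simp only [transpose_mul, Matrix.mul_assoc]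
    _ = (A * B * A)ᵀ * Cᵀ := by simp only [transpose_mul, Matrix.mul_assoc]
    _ = Aᵀ * Cᵀ := by rw [hB1]
    _ = (C * A)ᵀ := by rw [transpose_mul]
    _ = C * A := hC4
  calc B = B * A * B := hB2.symm
  _ = C * A * B := by rw [hBA]
  _ = C * (A * B) := by simp only [Matrix.mul_assoc]
  _ = C * (A * C) := by rw [hAB]
  _ = C * A * C := by simp only [Matrix.mul_assoc]
  _ = C := hC2

/-- Cauchy–Schwarz for a positive semidefinite real matrix. -/
lemma cs_psd {n : ℕ} {S : Matrix (Fin n) (Fin n) ℝ} (hS : S.PosSemidef)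
    (a b : Fin n → ℝ) :
    (a ⬝ᵥ S.mulVec b) ^ 2 ≤ (a ⬝ᵥ S.mulVec a) * (b ⬝ᵥ S.mulVec b) := by
  have hsymm : ∀ u v : Fin n → ℝ, u ⬝ᵥ S.mulVec v = v ⬝ᵥ S.mulVec u := by
    intro u v
    have hSt : Sᵀ = S := by
      have := hS.1
      rwa [Matrix.IsHermitian, conjTranspose_eq_transpose_of_trivial] at this
    rw [dotProduct_mulVec, ← mulVec_transpose, hSt, dotProduct_comm]
  have key : ∀ t : ℝ, 0 ≤ (b ⬝ᵥ S.mulVec b) * (t * t) + (2 * (a ⬝ᵥ S.mulVec b)) * t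
      + (a ⬝ᵥ S.mulVec a) := by
    intro t
    have h := hS.dotProduct_mulVec_nonneg (a + t • b)
    simp only [star_trivial, mulVec_add, mulVec_smul, dotProduct_add, add_dotProduct,
      smul_dotProduct, dotProduct_smul, smul_eq_mul] at h
    have hba : b ⬝ᵥ S.mulVec a = a ⬝ᵥ S.mulVec b := hsymm b a
    rw [hba] at h
    have heq : (b ⬝ᵥ S.mulVec b) * (t * t) + (2 * (a ⬝ᵥ S.mulVec b)) * t
        + (a ⬝ᵥ S.mulVec a)
        = a ⬝ᵥ S.mulVec a + t * (a ⬝ᵥ S.mulVec b)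
          + t * (a ⬝ᵥ S.mulVec b + t * (b ⬝ᵥ S.mulVec b)) := by ring
    rw [heq]
    exact h
  have hd := discrim_le_zero key
  rw [discrim] at hd
  nlinarith [hd]

/-- Minimality of the eigenvalue `λ̲` in the worst-case eigenmode relation:
`K - λ̲(M + (1/(λ̲ d_R))QQᵀ)` is positive semidefinite. -/
theorem eigenvalue_minimality {n q : ℕ}
    (K M : Matrix (Fin n) (Fin n) ℝ) (Q : Matrix (Fin n) (Fin q) ℝ)
    (Sdag : Matrix (Fin n) (Fin n) ℝ) (lam dR : ℝ)
    (hK : K.PosSemidef) (hM : M.PosSemidef) (hlam : 0 < lam)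
    (hS : (K - lam • M).PosSemidef)
    (hSdag : IsMoorePenrose (K - lam • M) Sdag)
    (hQ : matRange Q ⊆ matRange (K - lam • M))
    (hEig : ∃ r : Fin q → ℝ, (∑ i, (r i) ^ 2 = 1) ∧
      (Qᵀ * Sdag * Q).mulVec r = dR • r)
    (hmax : ∀ (ν : ℝ) (v : Fin q → ℝ), v ≠ 0 →
      (Qᵀ * Sdag * Q).mulVec v = ν • v → ν ≤ dR)
    (hdR : 0 < dR) :
    (K - lam • (M + (1 / (lam * dR)) • (Q * Qᵀ))).PosSemidef := by
  classical
  set S := K - lam • M with hSdef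
  -- S is symmetric
  have hSt : Sᵀ = S := by
    have := hS.1
    rwa [Matrix.IsHermitian, conjTranspose_eq_transpose_of_trivial] at this
  -- Sdag is symmetric (by uniqueness of the Moore–Penrose inverse)
  have hDagT : Sdagᵀ = Sdag := by
    obtain ⟨h1, h2, h3, h4⟩ := hSdag
    have hT : IsMoorePenrose S Sdagᵀ := by
      refine ⟨?_, ?_, ?_, ?_⟩
      · calc S * Sdagᵀ * S = (Sᵀ * Sdagᵀ) * Sᵀ := by rw [hSt]
        _ = (S * Sdag * S)ᵀ := by simp only [transpose_mul, Matrix.mul_assoc]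
        _ = Sᵀ := by rw [h1]
        _ = S := hSt
      · calc Sdagᵀ * S * Sdagᵀ = (Sdagᵀ * Sᵀ) * Sdagᵀ := by rw [hSt]
        _ = (Sdag * S * Sdag)ᵀ := by simp only [transpose_mul, Matrix.mul_assoc]
        _ = Sdagᵀ := by rw [h2]
      · calc (S * Sdagᵀ)ᵀ = Sdag * Sᵀ := by rw [transpose_mul, transpose_transpose]
        _ = Sdag * S := by rw [hSt]
        _ = (Sdag * S)ᵀ := h4.symm
        _ = Sᵀ * Sdagᵀ := by rw [transpose_mul]
        _ = S * Sdagᵀ := by rw [hSt]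
      · calc (Sdagᵀ * S)ᵀ = Sᵀ * Sdag := by rw [transpose_mul, transpose_transpose]
        _ = S * Sdag := by rw [hSt]
        _ = (S * Sdag)ᵀ := h3.symm
        _ = Sdagᵀ * Sᵀ := by rw [transpose_mul]
        _ = Sdagᵀ * S := by rw [hSt]
    exact (mp_unique_s14 hT ⟨h1, h2, h3, h4⟩)
  -- S Sdag acts as the identity on the range of Q
  have hproj : ∀ v : Fin q → ℝ, S.mulVec (Sdag.mulVec (Q.mulVec v)) = Q.mulVec v := by
    intro v
    obtain ⟨u, hu⟩ := hQ ⟨v, rfl⟩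
    rw [← hu, mulVec_mulVec, mulVec_mulVec, hSdag.1]
  -- The matrix A = Qᵀ Sdag Q and its quadratic form bound
  set A := Qᵀ * Sdag * Q with hAdef
  have hAt : Aᵀ = A := by
    rw [hAdef, transpose_mul, transpose_mul, transpose_transpose, hDagT, Matrix.mul_assoc]
  have hAH : A.IsHermitian := by
    rwa [Matrix.IsHermitian, conjTranspose_eq_transpose_of_trivial]
  have hbound : ∀ y : Fin q → ℝ, y ⬝ᵥ A.mulVec y ≤ dR * (y ⬝ᵥ y) := by
    set B := dR • (1 : Matrix (Fin q) (Fin q) ℝ) - A with hBdef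
    have hBH : B.IsHermitian := by
      rw [Matrix.IsHermitian, conjTranspose_eq_transpose_of_trivial, hBdef,
        transpose_sub, transpose_smul, transpose_one, hAt]
    have hBmul : ∀ y : Fin q → ℝ, B.mulVec y = dR • y - A.mulVec y := by
      intro y
      rw [hBdef, sub_mulVec, smul_mulVec, one_mulVec]
    have hBpsd : B.PosSemidef := by
      apply hBH.posSemidef_iff_eigenvalues_nonneg.mpr
      intro i
      set ν := hBH.eigenvalues i with hν
      set v := ⇑(hBH.eigenvectorBasis i) with hv
      have hvec : B.mulVec v = ν • v := hBH.mulVec_eigenvectorBasis i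
      have hvne : v ≠ 0 := by
        have := hBH.eigenvectorBasis.orthonormal.ne_zero i
        intro h
        apply this
        ext j
        exact congrFun h j
      have hAv : A.mulVec v = (dR - ν) • v := by
        have := hBmul v
        rw [hvec] at this
        have h2 : A.mulVec v = dR • v - ν • v := by
          rw [eq_sub_iff_add_eq] at this ⊢
          rw [← this]; abel
        rw [h2, sub_smul]
      have := hmax (dR - ν) v hvne hAv
      show (0 : ℝ) ≤ ν
      linarith
    intro y
    have h := hBpsd.dotProduct_mulVec_nonneg y
    simp only [star_trivial] at h
    rw [hBmul y, dotProduct_sub, dotProduct_smul, smul_eq_mul] at h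
    linarith
  -- Rewrite the goal matrix as S - dR⁻¹ • (Q Qᵀ)
  have hcoef : lam * (1 / (lam * dR)) = dR⁻¹ := by
    field_simp
  have hmat : K - lam • (M + (1 / (lam * dR)) • (Q * Qᵀ))
      = S - dR⁻¹ • (Q * Qᵀ) := by
    rw [smul_add, smul_smul, hcoef, hSdef, sub_add_eq_sub_sub]
  rw [hmat]
  refine PosSemidef.of_dotProduct_mulVec_nonneg ?_ ?_
  · rw [Matrix.IsHermitian, conjTranspose_eq_transpose_of_trivial, transpose_sub,
      transpose_smul, transpose_mul, transpose_transpose, hSt]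
  · intro x
    simp only [star_trivial]
    rw [sub_mulVec, dotProduct_sub, smul_mulVec, dotProduct_smul, smul_eq_mul]
    set y := Qᵀ.mulVec x with hy
    have hQQ : x ⬝ᵥ (Q * Qᵀ).mulVec x = y ⬝ᵥ y := by
      rw [← mulVec_mulVec, dotProduct_mulVec, ← mulVec_transpose, dotProduct_comm]
    set b := Sdag.mulVec (Q.mulVec y) with hb
    have h1 : x ⬝ᵥ S.mulVec b = y ⬝ᵥ y := by
      rw [hb, hproj, dotProduct_mulVec, ← mulVec_transpose, dotProduct_comm]
    have h2 : b ⬝ᵥ S.mulVec b = y ⬝ᵥ A.mulVec y := by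
      have hAy : A.mulVec y = Qᵀ.mulVec b := by
        rw [hAdef, ← mulVec_mulVec, ← mulVec_mulVec, hb]
      have hSb : S.mulVec b = Q.mulVec y := by rw [hb, hproj]
      rw [hSb, hAy, dotProduct_mulVec, ← mulVec_transpose, dotProduct_comm]
    have hcs := cs_psd hS x b
    have ht0 : 0 ≤ y ⬝ᵥ y := by
      apply Finset.sum_nonneg
      intro i _
      exact mul_self_nonneg _
    have ht1 : 0 ≤ x ⬝ᵥ S.mulVec x := by
      have := hS.dotProduct_mulVec_nonneg x
      simpa using this
    have hA2 : b ⬝ᵥ S.mulVec b ≤ dR * (y ⬝ᵥ y) := h2 ▸ hbound y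
    rw [hQQ]
    rcases eq_or_lt_of_le ht0 with h0 | h0
    · rw [← h0]
      simpa using ht1
    · have hkey : (y ⬝ᵥ y) ^ 2 ≤ (x ⬝ᵥ S.mulVec x) * (dR * (y ⬝ᵥ y)) := by
        calc (y ⬝ᵥ y) ^ 2 = (x ⬝ᵥ S.mulVec b) ^ 2 := by rw [h1]
        _ ≤ (x ⬝ᵥ S.mulVec x) * (b ⬝ᵥ S.mulVec b) := hcs
        _ ≤ (x ⬝ᵥ S.mulVec x) * (dR * (y ⬝ᵥ y)) := by
            exact mul_le_mul_of_nonneg_left hA2 ht1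
      have : y ⬝ᵥ y ≤ dR * (x ⬝ᵥ S.mulVec x) := by nlinarith
      rw [sub_nonneg, inv_mul_le_iff₀ hdR]
      linarith
end
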